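/- Let R be a commutative ring, 𝔞 an ideal, and M, N, P R-modules. Then there is a natural isomorphism Hom_R((M/𝔞M) ⊗_R P, N) ≅ Hom_R(P, Hom_R(M/𝔞M, N)). In particular, if N is 𝔞-reduced with respect to M and P is 𝔞-coreduced with respect to M, then Hom_R(Λ_𝔞(M,P), N) ≅ Hom_R(P, Γ_𝔞(M,N)), where Λ_𝔞(M,P) ≅ M/𝔞M ⊗_R P and Γ_𝔞(M,N) ≅ Hom_R(M/𝔞M, N) (the generalized Greenlees–May duality). -/

import Mathlib

open TensorProduct

/-- An `R`-module `P` is `𝔞`-reduced if `a²p = 0` implies `ap = 0` for `a ∈ 𝔞`, `p ∈ P`. -/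
def IsAReduced {R : Type*} [CommRing R] (𝔞 : Ideal R) (P : Type*) [AddCommGroup P]
    [Module R P] : Prop :=
  ∀ a ∈ 𝔞, ∀ p : P, (a * a) • p = 0 → a • p = 0

/-- An `R`-module `P` is `𝔞`-coreduced if `𝔞²P = 𝔞P`. -/
def IsACoreduced {R : Type*} [CommRing R] (𝔞 : Ideal R) (P : Type*) [AddCommGroup P]
    [Module R P] : Prop :=
  (𝔞 ^ 2) • (⊤ : Submodule R P) = 𝔞 • (⊤ : Submodule R P)

/-- The projection `M ⧸ 𝔞^l M → M ⧸ 𝔞^k M` for `k ≤ l`. -/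
def quotPowProj {R : Type*} [CommRing R] (𝔞 : Ideal R) (M : Type*) [AddCommGroup M]
    [Module R M] (k l : ℕ) (h : k ≤ l) :
    (M ⧸ ((𝔞 ^ l) • ⊤ : Submodule R M)) →ₗ[R] (M ⧸ ((𝔞 ^ k) • ⊤ : Submodule R M)) :=
  Submodule.mapQ _ _ LinearMap.id
    (by simpa using Submodule.smul_mono_left (Ideal.pow_le_pow_right h))

/-- The inverse limit of an inverse system of modules indexed by `ℕ`. -/
def invLimit {R : Type*} [CommRing R] (T : ℕ → Type*) [∀ k, AddCommGroup (T k)]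
    [∀ k, Module R (T k)] (p : ∀ k l : ℕ, k ≤ l → T l →ₗ[R] T k) :
    Submodule R (∀ k, T k) where
  carrier := {x | ∀ (k l : ℕ) (h : k ≤ l), p k l h (x l) = x k}
  add_mem' := by intro a b ha hb k l h; simp [map_add, ha k l h, hb k l h]
  zero_mem' := by intro k l h; simp
  smul_mem' := by intro c a ha k l h; simp [map_smul, ha k l h]

/-- `Γ_𝔞(M,N) = colim_k Hom(M/𝔞^k M, N)`. -/
def gammaGen {R : Type*} [CommRing R] (𝔞 : Ideal R) (M N : Type*) [AddCommGroup M]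
    [Module R M] [AddCommGroup N] [Module R N] : Type _ :=
  Module.DirectLimit (fun k : ℕ => (M ⧸ ((𝔞 ^ k) • ⊤ : Submodule R M)) →ₗ[R] N)
    (fun k l h => LinearMap.lcomp R N (quotPowProj 𝔞 M k l h))

noncomputable instance {R : Type*} [CommRing R] (𝔞 : Ideal R) (M N : Type*)
    [AddCommGroup M] [Module R M] [AddCommGroup N] [Module R N] :
    AddCommGroup (gammaGen 𝔞 M N) := by unfold gammaGen; infer_instance

noncomputable instance {R : Type*} [CommRing R] (𝔞 : Ideal R) (M N : Type*)
    [AddCommGroup M] [Module R M] [AddCommGroup N] [Module R N] :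
    Module R (gammaGen 𝔞 M N) := by unfold gammaGen; infer_instance

/-- `Λ_𝔞(M,P) = lim_k (M/𝔞^k M ⊗ P)`. -/
def lambdaGen {R : Type*} [CommRing R] (𝔞 : Ideal R) (M P : Type*) [AddCommGroup M]
    [Module R M] [AddCommGroup P] [Module R P] : Type _ :=
  invLimit (fun k : ℕ => (M ⧸ ((𝔞 ^ k) • ⊤ : Submodule R M)) ⊗[R] P)
    (fun k l h => LinearMap.rTensor P (quotPowProj 𝔞 M k l h))

noncomputable instance {R : Type*} [CommRing R] (𝔞 : Ideal R) (M P : Type*)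
    [AddCommGroup M] [Module R M] [AddCommGroup P] [Module R P] :
    AddCommGroup (lambdaGen 𝔞 M P) := by unfold lambdaGen; infer_instance

noncomputable instance {R : Type*} [CommRing R] (𝔞 : Ideal R) (M P : Type*)
    [AddCommGroup M] [Module R M] [AddCommGroup P] [Module R P] :
    Module R (lambdaGen 𝔞 M P) := by unfold lambdaGen; infer_instance


section GMaux

variable {R : Type*} [CommRing R] (𝔞 : Ideal R) (M N P : Type*)
  [AddCommGroup M] [Module R M] [AddCommGroup N] [Module R N]
  [AddCommGroup P] [Module R P]

lemma quotPowProj_mk (k l : ℕ) (h : k ≤ l) (x : M) :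
    quotPowProj 𝔞 M k l h (Submodule.Quotient.mk x) = Submodule.Quotient.mk x := by
  simp [quotPowProj, Submodule.mapQ_apply]

/-- Reducedness propagates from squares to all powers. -/
lemma gm_reduced_pow {Q : Type*} [AddCommGroup Q] [Module R Q]
    (hr : IsAReduced 𝔞 Q) {a : R} (ha : a ∈ 𝔞) :
    ∀ (k : ℕ) (q : Q), a ^ (k + 1) • q = 0 → a • q = 0 := by
  intro k
  induction k with
  | zero => intro q hq; simpa using hq
  | succ k ih =>
    intro q hq
    have h2 : (a ^ (k + 1) * a ^ (k + 1)) • q = 0 := by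
      have he : a ^ (k + 1) * a ^ (k + 1) = a ^ k * a ^ (k + 2) := by ring
      rw [he, mul_smul, hq, smul_zero]
    have hmem : a ^ (k + 1) ∈ 𝔞 := by
      rw [pow_succ]; exact Ideal.mul_mem_left _ _ ha
    exact ih q (hr _ hmem q h2)

/-- Coreducedness propagates: `𝔞^(k+1) • ⊤ = 𝔞 • ⊤`. -/
lemma gm_coreduced_pow {Q : Type*} [AddCommGroup Q] [Module R Q]
    (hc : IsACoreduced 𝔞 Q) :
    ∀ k : ℕ, ((𝔞 ^ (k + 1)) • ⊤ : Submodule R Q) = 𝔞 • ⊤ := by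
  have hc' : ((𝔞 * 𝔞) • ⊤ : Submodule R Q) = 𝔞 • ⊤ := by
    have := hc; rwa [IsACoreduced, pow_two] at this
  intro k
  induction k with
  | zero => rw [pow_one]
  | succ k ih =>
    rw [pow_succ', ← Ideal.smul_eq_mul, Submodule.smul_assoc, ih,
      ← Submodule.smul_assoc, Ideal.smul_eq_mul, hc']

/-- If a map kills `𝔞^(k+1) • ⊤` then (under reducedness of `Hom(M,N)`) it kills `𝔞 • ⊤`. -/
lemma gm_kills (hr : IsAReduced 𝔞 (M →ₗ[R] N)) (k : ℕ) (f : M →ₗ[R] N)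
    (hf : ∀ x ∈ ((𝔞 ^ (k + 1)) • ⊤ : Submodule R M), f x = 0) :
    ∀ x ∈ ((𝔞 • ⊤ : Submodule R M)), f x = 0 := by
  intro x hx
  refine Submodule.smul_induction_on hx ?_ ?_
  · intro a ha m _
    have hpow : a ^ (k + 1) • f = 0 := by
      ext m'
      have : a ^ (k + 1) • m' ∈ ((𝔞 ^ (k + 1)) • ⊤ : Submodule R M) :=
        Submodule.smul_mem_smul (Ideal.pow_mem_pow ha _) trivial
      simpa [LinearMap.smul_apply, map_smul] using hf _ this
    have haf : a • f = 0 := gm_reduced_pow 𝔞 hr ha k f hpow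
    have := LinearMap.congr_fun haf m
    simpa [LinearMap.smul_apply, map_smul] using this
  · intro y z hy hz
    rw [map_add, hy, hz, add_zero]

/-- The range of `(𝔞^k • ⊤) ⊗ P → M ⊗ P` is `𝔞^k • ⊤`. -/
lemma gm_range_eq (I : Ideal R) :
    LinearMap.range (TensorProduct.map ((I • ⊤ : Submodule R M).subtype)
      (LinearMap.id : P →ₗ[R] P)) = (I • ⊤ : Submodule R (M ⊗[R] P)) := by
  apply le_antisymm
  · rintro _ ⟨t, rfl⟩
    induction t with
    | zero => simp
    | tmul x p =>
      simp only [TensorProduct.map_tmul, LinearMap.id_coe, id_eq, Submodule.coe_subtype]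
      refine Submodule.smul_induction_on x.2 (fun r hr n _ => ?_) (fun y z hy hz => ?_)
      · rw [← TensorProduct.smul_tmul']
        exact Submodule.smul_mem_smul hr trivial
      · rw [TensorProduct.add_tmul]; exact add_mem hy hz
    | add t₁ t₂ h₁ h₂ =>
      rw [map_add]; exact add_mem h₁ h₂
  · rw [Submodule.smul_le]
    intro r hr t _
    have : ∀ t : M ⊗[R] P, r • t ∈ LinearMap.range (TensorProduct.map
        ((I • ⊤ : Submodule R M).subtype) (LinearMap.id : P →ₗ[R] P)) := by
      intro t
      induction t with
      | zero => rw [smul_zero]; exact zero_mem _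
      | tmul m p =>
        refine ⟨(⟨r • m, Submodule.smul_mem_smul hr trivial⟩ :
          (I • ⊤ : Submodule R M)) ⊗ₜ p, ?_⟩
        simp [TensorProduct.smul_tmul']
      | add t₁ t₂ h₁ h₂ =>
        rw [smul_add]; exact add_mem h₁ h₂
    exact this t

variable {𝔞 M N P}

/-- Transitivity of the quotient projections after `lcomp`. -/
lemma gm_F_trans (j k l : ℕ) (hjk : j ≤ k) (hkl : k ≤ l)
    (φ : (M ⧸ ((𝔞 ^ j) • ⊤ : Submodule R M)) →ₗ[R] N) :
    LinearMap.lcomp R N (quotPowProj 𝔞 M k l hkl)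
      (LinearMap.lcomp R N (quotPowProj 𝔞 M j k hjk) φ) =
    LinearMap.lcomp R N (quotPowProj 𝔞 M j l (hjk.trans hkl)) φ := by
  refine LinearMap.ext fun x => ?_
  obtain ⟨m, rfl⟩ := Submodule.Quotient.mk_surjective _ x
  simp [quotPowProj_mk]

lemma gm_F_self (k : ℕ) (h : k ≤ k)
    (φ : (M ⧸ ((𝔞 ^ k) • ⊤ : Submodule R M)) →ₗ[R] N) :
    LinearMap.lcomp R N (quotPowProj 𝔞 M k k h) φ = φ := by
  refine LinearMap.ext fun x => ?_
  obtain ⟨m, rfl⟩ := Submodule.Quotient.mk_surjective _ x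
  simp [quotPowProj_mk]

lemma gm_p_trans (j k l : ℕ) (hjk : j ≤ k) (hkl : k ≤ l)
    (z : (M ⧸ ((𝔞 ^ l) • ⊤ : Submodule R M)) ⊗[R] P) :
    LinearMap.rTensor P (quotPowProj 𝔞 M j k hjk)
      (LinearMap.rTensor P (quotPowProj 𝔞 M k l hkl) z) =
    LinearMap.rTensor P (quotPowProj 𝔞 M j l (hjk.trans hkl)) z := by
  induction z with
  | zero => simp
  | tmul x p =>
    obtain ⟨m, rfl⟩ := Submodule.Quotient.mk_surjective _ x
    simp [quotPowProj_mk]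
  | add z₁ z₂ h₁ h₂ => simp [h₁, h₂]

lemma gm_p_self (k : ℕ) (h : k ≤ k)
    (z : (M ⧸ ((𝔞 ^ k) • ⊤ : Submodule R M)) ⊗[R] P) :
    LinearMap.rTensor P (quotPowProj 𝔞 M k k h) z = z := by
  induction z with
  | zero => simp
  | tmul x p =>
    obtain ⟨m, rfl⟩ := Submodule.Quotient.mk_surjective _ x
    simp [quotPowProj_mk]
  | add z₁ z₂ h₁ h₂ => simp [h₁, h₂]

variable (𝔞 M P)

/-- Comparison equivalence `(M ⧸ 𝔞^k M) ⊗ P ≃ (M ⊗ P) ⧸ 𝔞^k (M ⊗ P)`. -/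
noncomputable def gmQE (k : ℕ) :
    ((M ⧸ ((𝔞 ^ k) • ⊤ : Submodule R M)) ⊗[R] P) ≃ₗ[R]
      ((M ⊗[R] P) ⧸ ((𝔞 ^ k) • ⊤ : Submodule R (M ⊗[R] P))) :=
  (TensorProduct.quotientTensorEquiv P ((𝔞 ^ k) • ⊤ : Submodule R M)) ≪≫ₗ
    Submodule.quotEquivOfEq _ _ (gm_range_eq M P (𝔞 ^ k))

lemma gmQE_mk_tmul (k : ℕ) (m : M) (p : P) :
    gmQE 𝔞 M P k ((Submodule.Quotient.mk m) ⊗ₜ p) = Submodule.Quotient.mk (m ⊗ₜ p) := by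
  simp [gmQE, Submodule.quotEquivOfEq_mk]

variable {𝔞 M P}

lemma gm_square (k l : ℕ) (h : k ≤ l)
    (z : (M ⧸ ((𝔞 ^ l) • ⊤ : Submodule R M)) ⊗[R] P) :
    gmQE 𝔞 M P k (LinearMap.rTensor P (quotPowProj 𝔞 M k l h) z) =
      Submodule.mapQ _ _ LinearMap.id
        (by simpa using Submodule.smul_mono_left (Ideal.pow_le_pow_right h))
        (gmQE 𝔞 M P l z) := by
  induction z with
  | zero => simp
  | tmul x p =>
    obtain ⟨m, rfl⟩ := Submodule.Quotient.mk_surjective _ x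
    simp [quotPowProj_mk, gmQE_mk_tmul, Submodule.mapQ_apply]
  | add z₁ z₂ h₁ h₂ => simp [h₁, h₂]

/-- Under coreducedness, the transition maps in the `Λ` system are bijective for `1 ≤ k ≤ l`. -/
lemma gm_p_bijective (hc : IsACoreduced 𝔞 (M ⊗[R] P)) (k l : ℕ) (hk : 1 ≤ k) (h : k ≤ l) :
    Function.Bijective (LinearMap.rTensor P (quotPowProj 𝔞 M k l h)) := by
  have hl : 1 ≤ l := hk.trans h
  have hEq : ((𝔞 ^ l) • ⊤ : Submodule R (M ⊗[R] P)) = (𝔞 ^ k) • ⊤ := by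
    obtain ⟨k', rfl⟩ := Nat.exists_eq_add_of_le hk
    obtain ⟨l', rfl⟩ := Nat.exists_eq_add_of_le hl
    rw [add_comm 1 k', add_comm 1 l', gm_coreduced_pow 𝔞 hc, gm_coreduced_pow 𝔞 hc]
  set q : ((M ⊗[R] P) ⧸ ((𝔞 ^ l) • ⊤ : Submodule R (M ⊗[R] P))) →ₗ[R]
      ((M ⊗[R] P) ⧸ ((𝔞 ^ k) • ⊤ : Submodule R (M ⊗[R] P))) :=
    Submodule.mapQ _ _ LinearMap.id
      (by simpa using Submodule.smul_mono_left (Ideal.pow_le_pow_right h)) with hq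
  have hqbij : Function.Bijective q := by
    have hfun : ⇑q = ⇑(Submodule.quotEquivOfEq _ _ hEq) := by
      funext z
      obtain ⟨w, rfl⟩ := Submodule.Quotient.mk_surjective _ z
      simp [hq, Submodule.mapQ_apply, Submodule.quotEquivOfEq_mk]
    rw [hfun]
    exact (Submodule.quotEquivOfEq _ _ hEq).bijective
  have hfun2 : ⇑(LinearMap.rTensor P (quotPowProj 𝔞 M k l h)) =
      ⇑(gmQE 𝔞 M P k).symm ∘ ⇑q ∘ ⇑(gmQE 𝔞 M P l) := by
    funext z
    simp only [Function.comp_apply]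
    rw [← gm_square k l h z, LinearEquiv.symm_apply_apply]
  rw [hfun2]
  exact ((gmQE 𝔞 M P k).symm.bijective.comp hqbij).comp (gmQE 𝔞 M P l).bijective

/-- Under reducedness, the transition maps in the `Γ` system are bijective for `1 ≤ k ≤ l`. -/
lemma gm_F_bijective (hr : IsAReduced 𝔞 (M →ₗ[R] N)) (k l : ℕ) (hk : 1 ≤ k) (h : k ≤ l) :
    Function.Bijective (LinearMap.lcomp R N (quotPowProj 𝔞 M k l h)) := by
  constructor
  · intro φ φ' hφ
    refine LinearMap.ext fun x => ?_
    obtain ⟨m, rfl⟩ := Submodule.Quotient.mk_surjective _ x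
    have := LinearMap.congr_fun hφ (Submodule.Quotient.mk m)
    simpa [quotPowProj_mk] using this
  · intro g
    obtain ⟨l', rfl⟩ := Nat.exists_eq_add_of_le (hk.trans h)
    set G : M →ₗ[R] N := g ∘ₗ Submodule.mkQ _ with hG
    have hkills : ∀ x ∈ ((𝔞 • ⊤ : Submodule R M)), G x = 0 := by
      refine gm_kills 𝔞 M N hr l' G ?_
      intro x hx
      have hx' : x ∈ ((𝔞 ^ (1 + l')) • ⊤ : Submodule R M) := by rwa [add_comm]
      simp [hG, (Submodule.Quotient.mk_eq_zero _).2 hx']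
    have hle : ((𝔞 ^ k) • ⊤ : Submodule R M) ≤ LinearMap.ker G := by
      obtain ⟨k', rfl⟩ := Nat.exists_eq_add_of_le hk
      intro x hx
      have hle2 : ((𝔞 ^ (1 + k')) • ⊤ : Submodule R M) ≤ 𝔞 • ⊤ :=
        Submodule.smul_mono_left (Ideal.pow_le_self (by omega))
      exact hkills x (hle2 hx)
    refine ⟨Submodule.liftQ _ G hle, ?_⟩
    refine LinearMap.ext fun x => ?_
    obtain ⟨m, rfl⟩ := Submodule.Quotient.mk_surjective _ x
    simp [quotPowProj_mk, Submodule.liftQ_apply, hG]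

variable (𝔞 M N P)

/-- The transition isomorphism in the `Γ` system, under reducedness. -/
noncomputable def gmEK (hr : IsAReduced 𝔞 (M →ₗ[R] N)) (k : ℕ) :
    ((M ⧸ ((𝔞 ^ 1) • ⊤ : Submodule R M)) →ₗ[R] N) ≃ₗ[R]
      ((M ⧸ ((𝔞 ^ (k + 1)) • ⊤ : Submodule R M)) →ₗ[R] N) :=
  LinearEquiv.ofBijective _ (gm_F_bijective hr 1 (k + 1) le_rfl (by omega))

lemma gmEK_apply (hr : IsAReduced 𝔞 (M →ₗ[R] N)) (k : ℕ)
    (x : (M ⧸ ((𝔞 ^ 1) • ⊤ : Submodule R M)) →ₗ[R] N) :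
    gmEK 𝔞 M N hr k x = LinearMap.lcomp R N (quotPowProj 𝔞 M 1 (k + 1) (by omega)) x := rfl

/-- The retractions onto the first stage of the `Γ` system. -/
noncomputable def gmGmap (hr : IsAReduced 𝔞 (M →ₗ[R] N)) (k : ℕ) :
    ((M ⧸ ((𝔞 ^ k) • ⊤ : Submodule R M)) →ₗ[R] N) →ₗ[R]
      ((M ⧸ ((𝔞 ^ 1) • ⊤ : Submodule R M)) →ₗ[R] N) :=
  match k with
  | 0 => LinearMap.lcomp R N (quotPowProj 𝔞 M 0 1 (Nat.zero_le 1))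
  | (j + 1) => ((gmEK 𝔞 M N hr j).symm : _ ≃ₗ[R] _).toLinearMap

lemma gmGmap_compat (hr : IsAReduced 𝔞 (M →ₗ[R] N)) :
    ∀ (k l : ℕ) (hkl : k ≤ l) (x : (M ⧸ ((𝔞 ^ k) • ⊤ : Submodule R M)) →ₗ[R] N),
      gmGmap 𝔞 M N hr l (LinearMap.lcomp R N (quotPowProj 𝔞 M k l hkl) x) =
        gmGmap 𝔞 M N hr k x := by
  intro k l hkl x
  cases k with
  | zero =>
    cases l with
    | zero =>
      show gmGmap 𝔞 M N hr 0 _ = gmGmap 𝔞 M N hr 0 x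
      rw [gm_F_self 0 hkl x]
    | succ j =>
      show (gmEK 𝔞 M N hr j).symm _ = _
      rw [LinearEquiv.symm_apply_eq, gmEK_apply]
      exact (gm_F_trans 0 1 (j + 1) (Nat.zero_le 1) (by omega) x).symm
  | succ i =>
    cases l with
    | zero => omega
    | succ j =>
      show (gmEK 𝔞 M N hr j).symm _ = (gmEK 𝔞 M N hr i).symm x
      rw [LinearEquiv.symm_apply_eq, gmEK_apply]
      conv_lhs => rw [show x = LinearMap.lcomp R N (quotPowProj 𝔞 M 1 (i + 1) (by omega))
        ((gmEK 𝔞 M N hr i).symm x) from ((gmEK 𝔞 M N hr i).apply_symm_apply x).symm]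
      exact gm_F_trans 1 (i + 1) (j + 1) (by omega) hkl _

/-- Under reducedness, `Γ_𝔞(M,N)` is just the first stage of the system. -/
noncomputable def gmGammaEquiv (hr : IsAReduced 𝔞 (M →ₗ[R] N)) :
    gammaGen 𝔞 M N ≃ₗ[R] ((M ⧸ ((𝔞 ^ 1) • ⊤ : Submodule R M)) →ₗ[R] N) :=
  LinearEquiv.ofLinear
    (Module.DirectLimit.lift R ℕ
      (fun k : ℕ => (M ⧸ ((𝔞 ^ k) • ⊤ : Submodule R M)) →ₗ[R] N)
      (fun k l h => LinearMap.lcomp R N (quotPowProj 𝔞 M k l h))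
      (gmGmap 𝔞 M N hr) (gmGmap_compat 𝔞 M N hr))
    (Module.DirectLimit.of R ℕ
      (fun k : ℕ => (M ⧸ ((𝔞 ^ k) • ⊤ : Submodule R M)) →ₗ[R] N)
      (fun k l h => LinearMap.lcomp R N (quotPowProj 𝔞 M k l h)) 1)
    (by
      refine LinearMap.ext fun x => ?_
      simp only [LinearMap.comp_apply, LinearMap.id_apply]
      erw [Module.DirectLimit.lift_of (gmGmap 𝔞 M N hr) (gmGmap_compat 𝔞 M N hr)]
      show (gmEK 𝔞 M N hr 0).symm x = x
      rw [LinearEquiv.symm_apply_eq, gmEK_apply]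
      exact (gm_F_self 1 le_rfl x).symm)
    (by
      refine LinearMap.ext fun z => ?_
      simp only [LinearMap.comp_apply, LinearMap.id_apply]
      refine Module.DirectLimit.induction_on z fun k x => ?_
      erw [LinearMap.comp_apply, Module.DirectLimit.lift_of (gmGmap 𝔞 M N hr)
        (gmGmap_compat 𝔞 M N hr)]
      cases k with
      | zero => exact Module.DirectLimit.of_f
      | succ j =>
        conv_rhs => rw [show x = LinearMap.lcomp R N (quotPowProj 𝔞 M 1 (j + 1) (by omega))
          ((gmEK 𝔞 M N hr j).symm x) from ((gmEK 𝔞 M N hr j).apply_symm_apply x).symm]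
        exact (Module.DirectLimit.of_f).symm)

/-- The transition isomorphism in the `Λ` system, under coreducedness. -/
noncomputable def gmET (hc : IsACoreduced 𝔞 (M ⊗[R] P)) (k : ℕ) :
    ((M ⧸ ((𝔞 ^ (k + 1)) • ⊤ : Submodule R M)) ⊗[R] P) ≃ₗ[R]
      ((M ⧸ ((𝔞 ^ 1) • ⊤ : Submodule R M)) ⊗[R] P) :=
  LinearEquiv.ofBijective _ (gm_p_bijective hc 1 (k + 1) le_rfl (by omega))

lemma gmET_apply (hc : IsACoreduced 𝔞 (M ⊗[R] P)) (k : ℕ)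
    (t : (M ⧸ ((𝔞 ^ (k + 1)) • ⊤ : Submodule R M)) ⊗[R] P) :
    gmET 𝔞 M P hc k t = LinearMap.rTensor P (quotPowProj 𝔞 M 1 (k + 1) (by omega)) t := rfl

/-- The candidate element of the inverse limit with value `t` at stage 1. -/
noncomputable def gmLambdaFun (hc : IsACoreduced 𝔞 (M ⊗[R] P))
    (t : (M ⧸ ((𝔞 ^ 1) • ⊤ : Submodule R M)) ⊗[R] P) (k : ℕ) :
    (M ⧸ ((𝔞 ^ k) • ⊤ : Submodule R M)) ⊗[R] P :=
  match k with
  | 0 => LinearMap.rTensor P (quotPowProj 𝔞 M 0 1 (Nat.zero_le 1)) t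
  | (j + 1) => (gmET 𝔞 M P hc j).symm t

lemma gmLambdaFun_mem (hc : IsACoreduced 𝔞 (M ⊗[R] P))
    (t : (M ⧸ ((𝔞 ^ 1) • ⊤ : Submodule R M)) ⊗[R] P) :
    gmLambdaFun 𝔞 M P hc t ∈ invLimit
      (fun k : ℕ => (M ⧸ ((𝔞 ^ k) • ⊤ : Submodule R M)) ⊗[R] P)
      (fun k l h => LinearMap.rTensor P (quotPowProj 𝔞 M k l h)) := by
  show ∀ (k l : ℕ) (h : k ≤ l), LinearMap.rTensor P (quotPowProj 𝔞 M k l h)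
    (gmLambdaFun 𝔞 M P hc t l) = gmLambdaFun 𝔞 M P hc t k
  intro k l h
  cases k with
  | zero =>
    cases l with
    | zero => exact gm_p_self 0 h _
    | succ j =>
      show LinearMap.rTensor P (quotPowProj 𝔞 M 0 (j + 1) h) ((gmET 𝔞 M P hc j).symm t) =
        LinearMap.rTensor P (quotPowProj 𝔞 M 0 1 (Nat.zero_le 1)) t
      conv_rhs => rw [show t = LinearMap.rTensor P (quotPowProj 𝔞 M 1 (j + 1) (by omega))
        ((gmET 𝔞 M P hc j).symm t) from ((gmET 𝔞 M P hc j).apply_symm_apply t).symm]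
      exact (gm_p_trans 0 1 (j + 1) (Nat.zero_le 1) (by omega) _).symm
  | succ i =>
    cases l with
    | zero => omega
    | succ j =>
      refine (gm_p_bijective hc 1 (i + 1) le_rfl (by omega)).injective ?_
      show LinearMap.rTensor P (quotPowProj 𝔞 M 1 (i + 1) (by omega))
          (LinearMap.rTensor P (quotPowProj 𝔞 M (i + 1) (j + 1) h)
            ((gmET 𝔞 M P hc j).symm t)) =
        LinearMap.rTensor P (quotPowProj 𝔞 M 1 (i + 1) (by omega)) ((gmET 𝔞 M P hc i).symm t)
      rw [gm_p_trans 1 (i + 1) (j + 1) (by omega) h]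
      have h1 : LinearMap.rTensor P (quotPowProj 𝔞 M 1 (j + 1) (by omega))
          ((gmET 𝔞 M P hc j).symm t) = t := (gmET 𝔞 M P hc j).apply_symm_apply t
      have h2 : LinearMap.rTensor P (quotPowProj 𝔞 M 1 (i + 1) (by omega))
          ((gmET 𝔞 M P hc i).symm t) = t := (gmET 𝔞 M P hc i).apply_symm_apply t
      rw [h1, h2]

/-- Under coreducedness, `Λ_𝔞(M,P)` is just the first stage of the system. -/
noncomputable def gmLambdaEquiv (hc : IsACoreduced 𝔞 (M ⊗[R] P)) :
    lambdaGen 𝔞 M P ≃ₗ[R] ((M ⧸ ((𝔞 ^ 1) • ⊤ : Submodule R M)) ⊗[R] P) :=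
  LinearEquiv.ofBijective
    ((LinearMap.proj (R := R) 1).comp (Submodule.subtype
      (invLimit (fun k : ℕ => (M ⧸ ((𝔞 ^ k) • ⊤ : Submodule R M)) ⊗[R] P)
        (fun k l h => LinearMap.rTensor P (quotPowProj 𝔞 M k l h)))))
    (by
      constructor
      · intro x y hxy
        apply Subtype.ext
        funext k
        have hx : ∀ (k l : ℕ) (h : k ≤ l), LinearMap.rTensor P (quotPowProj 𝔞 M k l h)
          (x.1 l) = x.1 k := x.2
        have hy : ∀ (k l : ℕ) (h : k ≤ l), LinearMap.rTensor P (quotPowProj 𝔞 M k l h)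
          (y.1 l) = y.1 k := y.2
        have h1 : x.1 1 = y.1 1 := hxy
        cases k with
        | zero => rw [← hx 0 1 (Nat.zero_le 1), ← hy 0 1 (Nat.zero_le 1), h1]
        | succ j =>
          refine (gm_p_bijective hc 1 (j + 1) le_rfl (by omega)).injective ?_
          rw [hx 1 (j + 1) (by omega), hy 1 (j + 1) (by omega), h1]
      · intro t
        refine ⟨⟨gmLambdaFun 𝔞 M P hc t, gmLambdaFun_mem 𝔞 M P hc t⟩, ?_⟩
        show (gmET 𝔞 M P hc 0).symm t = t
        rw [LinearEquiv.symm_apply_eq, gmET_apply]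
        exact (gm_p_self 1 le_rfl t).symm)

end GMaux

/-- generalised Greenlees–May duality: there is a natural isomorphism
`Hom((M/𝔞M) ⊗ P, N) ≅ Hom(P, Hom(M/𝔞M, N))`; in particular, if `N` is `𝔞`-reduced with
respect to `M` and `P` is `𝔞`-coreduced with respect to `M`, then
`Hom(Λ_𝔞(M,P), N) ≅ Hom(P, Γ_𝔞(M,N))`. -/
theorem generalized_greenlees_may {R : Type*} [CommRing R] (𝔞 : Ideal R)
    (M N P : Type*) [AddCommGroup M] [Module R M] [AddCommGroup N] [Module R N]
    [AddCommGroup P] [Module R P] :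
    Nonempty
      ((((M ⧸ (𝔞 • ⊤ : Submodule R M)) ⊗[R] P) →ₗ[R] N) ≃ₗ[R]
        (P →ₗ[R] ((M ⧸ (𝔞 • ⊤ : Submodule R M)) →ₗ[R] N))) ∧
    (IsAReduced 𝔞 (M →ₗ[R] N) → IsACoreduced 𝔞 (M ⊗[R] P) →
      Nonempty ((lambdaGen 𝔞 M P →ₗ[R] N) ≃ₗ[R] (P →ₗ[R] gammaGen 𝔞 M N))) := by
  constructor
  · exact ⟨(LinearEquiv.arrowCongr
      (TensorProduct.comm R (M ⧸ (𝔞 • ⊤ : Submodule R M)) P) (LinearEquiv.refl R N)) ≪≫ₗ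
      (TensorProduct.lift.equiv (RingHom.id R) P (M ⧸ (𝔞 • ⊤ : Submodule R M)) N).symm⟩
  · intro hr hc
    refine ⟨?_⟩
    exact (LinearEquiv.arrowCongr ((gmLambdaEquiv 𝔞 M P hc) ≪≫ₗ
        TensorProduct.congr (Submodule.quotEquivOfEq _ _ (by rw [pow_one]))
          (LinearEquiv.refl R P)) (LinearEquiv.refl R N)) ≪≫ₗ
      ((LinearEquiv.arrowCongr
        (TensorProduct.comm R (M ⧸ (𝔞 • ⊤ : Submodule R M)) P) (LinearEquiv.refl R N)) ≪≫ₗ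
        (TensorProduct.lift.equiv (RingHom.id R) P (M ⧸ (𝔞 • ⊤ : Submodule R M)) N).symm) ≪≫ₗ
      (LinearEquiv.arrowCongr (LinearEquiv.refl R P)
        ((LinearEquiv.arrowCongr (Submodule.quotEquivOfEq _ _ (by rw [pow_one]))
          (LinearEquiv.refl R N)).symm ≪≫ₗ (gmGammaEquiv 𝔞 M N hr).symm))
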